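/- Let E be a real Banach space and S : E ⇉ E* a multifunction. Assume that for every y ∈ E the multifunction x ↦ S(x) + J(x − y) has hyperdense range. Then gra S is stably r_L-dense in E × E*. -/

import Mathlib

open Pointwise

/-- `r_L(x, x*) = ½‖x‖² + ½‖x*‖² + ⟨x, x*⟩`. -/
noncomputable def rL {E : Type*} [NormedAddCommGroup E] [NormedSpace ℝ E]
    (x : E) (x' : StrongDual ℝ E) : ℝ :=
  1 / 2 * ‖x‖ ^ 2 + 1 / 2 * ‖x'‖ ^ 2 + x' x

/-- The duality mapping `J(x) = {x* : ⟨x, x*⟩ = ‖x‖², ‖x*‖ = ‖x‖}`. -/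
def dualityJ {E : Type*} [NormedAddCommGroup E] [NormedSpace ℝ E] (x : E) :
    Set (StrongDual ℝ E) :=
  {x' | x' x = ‖x‖ ^ 2 ∧ ‖x'‖ = ‖x‖}

/-- `A ⊆ E × E*` is stably `r_L`-dense: for every `(y, y*)` there is `M ≥ 0` such that
the infimum of `r_L(s - y, s* - y*)` over `(s, s*) ∈ A` with `‖s - y‖ ≤ M` and
`‖s* - y*‖ ≤ M` is `0`. -/
def StablyRLDense {E : Type*} [NormedAddCommGroup E] [NormedSpace ℝ E]
    (A : Set (E × StrongDual ℝ E)) : Prop :=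
  ∀ (y : E) (y' : StrongDual ℝ E), ∃ M : ℝ, 0 ≤ M ∧
    ∀ ε > (0 : ℝ), ∃ p ∈ A, ‖p.1 - y‖ ≤ M ∧ ‖p.2 - y'‖ ≤ M ∧
      rL (p.1 - y) (p.2 - y') < ε

/-- `T : E ⇉ E*` has hyperdense range: for every `y*` there is a sequence
`(tₙ, tₙ*)` in the graph of `T` with `(tₙ)` bounded and `‖tₙ* - y*‖ → 0`. -/
def HyperdenseRange {E : Type*} [NormedAddCommGroup E] [NormedSpace ℝ E]
    (T : E → Set (StrongDual ℝ E)) : Prop :=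
  ∀ y' : StrongDual ℝ E, ∃ t : ℕ → E × StrongDual ℝ E,
    (∀ n, (t n).2 ∈ T (t n).1) ∧ (∃ C : ℝ, ∀ n, ‖(t n).1‖ ≤ C) ∧
    Filter.Tendsto (fun n => ‖(t n).2 - y'‖) Filter.atTop (nhds 0)

open Filter Topology

/-!
Given `(y, y*)`, hyperdensity of `S + J(· - y)` yields `s* ∈ S s` and `j ∈ J(s - y)` with `s` in
a fixed ball and `e := s* + j - y*` arbitrarily small. Writing `x := s - y`, the defining identities
of `J` give `r_L(x, e - j) = ½‖x‖² + ½‖e - j‖² + e x - ‖x‖² ≤ ‖e‖ (‖e‖ / 2 + 2‖x‖)`, which tends to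
`0` with `‖e‖`, while `‖e - j‖ ≤ ‖e‖ + ‖x‖` stays bounded.
-/

section DualityMapping

variable {E : Type*} [NormedAddCommGroup E] [NormedSpace ℝ E] {x : E} {j : StrongDual ℝ E}

lemma norm_sub_le_of_mem_dualityJ (hj : j ∈ dualityJ x) (e : StrongDual ℝ E) :
    ‖e - j‖ ≤ ‖e‖ + ‖x‖ :=
  hj.2 ▸ norm_sub_le e j

lemma rL_sub_le_of_mem_dualityJ (hj : j ∈ dualityJ x) (e : StrongDual ℝ E) :
    rL x (e - j) ≤ ‖e‖ * (‖e‖ / 2 + 2 * ‖x‖) := by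
  have hsq : ‖e - j‖ ^ 2 ≤ (‖e‖ + ‖x‖) ^ 2 := by
    gcongr
    exact norm_sub_le_of_mem_dualityJ hj e
  have hex : e x ≤ ‖e‖ * ‖x‖ := (le_abs_self _).trans (e.le_opNorm x)
  have hval : (e - j) x = e x - ‖x‖ ^ 2 := by
    rw [sub_apply, hj.1]
  rw [rL, hval]
  nlinarith

end DualityMapping

theorem stmt18_general {E : Type*} [NormedAddCommGroup E] [NormedSpace ℝ E]
    (S : E → Set (StrongDual ℝ E))
    (hS : ∀ y : E, HyperdenseRange (fun x => S x + dualityJ (x - y))) :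
    StablyRLDense {p : E × StrongDual ℝ E | p.2 ∈ S p.1} := by
  intro y y'
  obtain ⟨t, ht, ⟨C, hC⟩, htend⟩ := hS y y'
  set B := C + ‖y‖
  have hx : ∀ n, ‖(t n).1 - y‖ ≤ B := fun n => (norm_sub_le _ _).trans (by linarith [hC n])
  refine ⟨B + 1, by linarith [norm_nonneg (t 0).1, hC 0, norm_nonneg y], fun ε hε => ?_⟩
  have hsmall : Tendsto (fun n => ‖(t n).2 - y'‖ * (‖(t n).2 - y'‖ / 2 + 2 * B)) atTop (𝓝 0) := by
    simpa using htend.mul ((htend.div_const 2).add_const (2 * B))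
  obtain ⟨n, hn1, hnε⟩ :=
    ((htend.eventually (eventually_le_nhds one_pos)).and
      (hsmall.eventually (eventually_lt_nhds hε))).exists
  obtain ⟨a, ha, j, hj, haj⟩ := ht n
  have hay : a - y' = ((t n).2 - y') - j := by
    simp only [← haj]
    abel
  refine ⟨((t n).1, a), ha, (hx n).trans (by linarith), ?_, ?_⟩
  · rw [hay]
    exact (norm_sub_le_of_mem_dualityJ hj _).trans (by linarith [hx n])
  · change rL _ (a - y') < ε
    rw [hay]
    refine (rL_sub_le_of_mem_dualityJ hj _).trans_lt (lt_of_le_of_lt ?_ hnε)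
    gcongr
    exact hx n

theorem stmt18 {E : Type*} [NormedAddCommGroup E] [NormedSpace ℝ E] [CompleteSpace E]
    (S : E → Set (StrongDual ℝ E))
    (hS : ∀ y : E, HyperdenseRange (fun x => S x + dualityJ (x - y))) :
    StablyRLDense {p : E × StrongDual ℝ E | p.2 ∈ S p.1} :=
  stmt18_general S hS
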